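/- arXiv:2411.12419 — 5 statements merged into one kernel-verified Lean document; each statement's English description precedes it below -/
import Mathlib

section
/- Let α, β, p1, p2 ∈ (0,1), a1, a2 > 0 with a1 + a2 = 1, and let p* = 1/(a1/p1 + a2/p2). Suppose P*(0,0), P*(0,1), P*(1,0), P*(1,1) satisfy the stationary equations of the one-type two-cell system: α·P*(0,0) = (1−α)β·P*(0,1); (1−(1−α)(1−β))·P*(0,1) = p*·P*(1,0); p*·P*(1,0) = α·P*(0,0) + αβ·P*(0,1) + β·P*(1,1); β·P*(1,1) = α(1−β)·P*(0,1); and they sum to 1. Define P(0,0) = P*(0,0), P(0,1) = a1·P*(0,1), P(0,2) = a2·P*(0,1), P(1,0) = (a1·p*/p1)·P*(1,0), P(2,0) = (a2·p*/p2)·P*(1,0), P(1,1) = a1²·P*(1,1), P(1,2) = P(2,1) = a1·a2·P*(1,1), P(2,2) = a2²·P*(1,1). Then these nine values satisfy the stationary equations of the two-type two-cell system: α·P(0,0) = (1−α)β·(P(0,1)+P(0,2)); (1−(1−α)(1−β))·P(0,1) = p1·P(1,0); (1−(1−α)(1−β))·P(0,2) = p2·P(2,0); p1·P(1,0) = α·a1·P(0,0)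 + α·a1·β·(P(0,1)+P(0,2)) + β·(P(1,1)+P(1,2)); β·P(1,1) = α·a1·(1−β)·P(0,1); β·P(1,2) = α·a1·(1−β)·P(0,2); p2·P(2,0) = α·a2·P(0,0) + α·a2·β·(P(0,1)+P(0,2)) + β·(P(2,1)+P(2,2)); β·P(2,1) = α·a2·(1−β)·P(0,1); β·P(2,2) = α·a2·(1−β)·P(0,2); and the nine values sum to 1. -/
theorem two_type_stationary_from_one_type (α β p1 p2 a1 a2 : ℝ)
    (hα : α ∈ Set.Ioo (0:ℝ) 1) (hβ : β ∈ Set.Ioo (0:ℝ) 1)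
    (hp1 : p1 ∈ Set.Ioo (0:ℝ) 1) (hp2 : p2 ∈ Set.Ioo (0:ℝ) 1)
    (ha1 : 0 < a1) (ha2 : 0 < a2) (hsum : a1 + a2 = 1)
    (pstar : ℝ) (hps : pstar = 1 / (a1 / p1 + a2 / p2))
    (S00 S01 S10 S11 : ℝ)
    (e12 : α * S00 = (1 - α) * β * S01)
    (e13 : (1 - (1 - α) * (1 - β)) * S01 = pstar * S10)
    (e14 : pstar * S10 = α * S00 + α * β * S01 + β * S11)
    (e15 : β * S11 = α * (1 - β) * S01)
    (e16 : S00 + S01 + S10 + S11 = 1)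
    (P00 P01 P02 P10 P20 P11 P12 P21 P22 : ℝ)
    (d00 : P00 = S00) (d01 : P01 = a1 * S01) (d02 : P02 = a2 * S01)
    (d10 : P10 = (a1 * pstar / p1) * S10) (d20 : P20 = (a2 * pstar / p2) * S10)
    (d11 : P11 = a1 ^ 2 * S11) (d12 : P12 = a1 * a2 * S11)
    (d21 : P21 = a1 * a2 * S11) (d22 : P22 = a2 ^ 2 * S11) :
    α * P00 = (1 - α) * β * (P01 + P02) ∧
    (1 - (1 - α) * (1 - β)) * P01 = p1 * P10 ∧
    (1 - (1 - α) * (1 - β)) * P02 = p2 * P20 ∧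
    p1 * P10 = α * a1 * P00 + α * a1 * β * (P01 + P02) + β * (P11 + P12) ∧
    β * P11 = α * a1 * (1 - β) * P01 ∧
    β * P12 = α * a1 * (1 - β) * P02 ∧
    p2 * P20 = α * a2 * P00 + α * a2 * β * (P01 + P02) + β * (P21 + P22) ∧
    β * P21 = α * a2 * (1 - β) * P01 ∧
    β * P22 = α * a2 * (1 - β) * P02 ∧
    P00 + P01 + P02 + P10 + P20 + P11 + P12 + P21 + P22 = 1 := by
  obtain ⟨hp1p, hp1l⟩ := hp1
  obtain ⟨hp2p, hp2l⟩ := hp2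
  have h1 : p1 ≠ 0 := ne_of_gt hp1p
  have h2 : p2 ≠ 0 := ne_of_gt hp2p
  have hden : (0:ℝ) < a1 / p1 + a2 / p2 := by positivity
  have hk1 : a1 * pstar / p1 + a2 * pstar / p2 = 1 := by
    rw [hps]; field_simp
  have h10a : p1 * (a1 * pstar / p1 * S10) = a1 * pstar * S10 := by
    field_simp
  have h20a : p2 * (a2 * pstar / p2 * S10) = a2 * pstar * S10 := by
    field_simp
  subst d00 d01 d02 d10 d20 d11 d12 d21 d22
  refine ⟨?_, ?_, ?_, ?_, ?_, ?_, ?_, ?_, ?_, ?_⟩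
  · linear_combination e12 - (1 - α) * β * S01 * hsum
  · rw [h10a]; linear_combination a1 * e13
  · rw [h20a]; linear_combination a2 * e13
  · rw [h10a]; linear_combination a1 * e14 - (α * a1 * β * S01 + β * a1 * S11) * hsum
  · linear_combination a1 ^ 2 * e15
  · linear_combination a1 * a2 * e15
  · rw [h20a]; linear_combination a2 * e14 - (α * a2 * β * S01 + β * a2 * S11) * hsum
  · linear_combination a1 * a2 * e15
  · linear_combination a2 ^ 2 * e15
  · linear_combination e16 + S01 * hsum + S10 * hk1 + (a1 + a2 + 1) * S11 * hsum
end

section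
/- Under the hypotheses and definitions of Theorem 2 (two cells, two particle types, β1 = β2 = β, P defined from P* via the harmonic-mean formulas), the aggregated probabilities match: P(0,0) = P*(0,0); P(0,1) + P(0,2) = P*(0,1); P(1,0) + P(2,0) = P*(1,0); and P(1,1) + P(1,2) + P(2,1) + P(2,2) = P*(1,1). -/
theorem aggregated_probabilities_match (α β p1 p2 a1 a2 : ℝ)
    (hα : α ∈ Set.Ioo (0:ℝ) 1) (hβ : β ∈ Set.Ioo (0:ℝ) 1)
    (hp1 : p1 ∈ Set.Ioo (0:ℝ) 1) (hp2 : p2 ∈ Set.Ioo (0:ℝ) 1)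
    (ha1 : 0 < a1) (ha2 : 0 < a2) (hsum : a1 + a2 = 1)
    (pstar : ℝ) (hps : pstar = 1 / (a1 / p1 + a2 / p2))
    (S00 S01 S10 S11 : ℝ)
    (e12 : α * S00 = (1 - α) * β * S01)
    (e13 : (1 - (1 - α) * (1 - β)) * S01 = pstar * S10)
    (e14 : pstar * S10 = α * S00 + α * β * S01 + β * S11)
    (e15 : β * S11 = α * (1 - β) * S01)
    (e16 : S00 + S01 + S10 + S11 = 1)
    (P00 P01 P02 P10 P20 P11 P12 P21 P22 : ℝ)
    (d00 : P00 = S00) (d01 : P01 = a1 * S01) (d02 : P02 = a2 * S01)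
    (d10 : P10 = (a1 * pstar / p1) * S10) (d20 : P20 = (a2 * pstar / p2) * S10)
    (d11 : P11 = a1 ^ 2 * S11) (d12 : P12 = a1 * a2 * S11)
    (d21 : P21 = a1 * a2 * S11) (d22 : P22 = a2 ^ 2 * S11) :
    P00 = S00 ∧ P01 + P02 = S01 ∧ P10 + P20 = S10 ∧
    P11 + P12 + P21 + P22 = S11 := by
  have hden : a1 / p1 + a2 / p2 > 0 :=
    add_pos (div_pos ha1 hp1.1) (div_pos ha2 hp2.1)
  have key : (a1 / p1 + a2 / p2) * pstar = 1 := by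
    rw [hps]; field_simp
  refine ⟨d00, ?_, ?_, ?_⟩
  · rw [d01, d02]; linear_combination S01 * hsum
  · rw [d10, d20]
    have hp1' := hp1.1.ne'
    have hp2' := hp2.1.ne'
    have h : a1 * pstar / p1 + a2 * pstar / p2 = (a1 / p1 + a2 / p2) * pstar := by
      field_simp
    calc a1 * pstar / p1 * S10 + a2 * pstar / p2 * S10
        = (a1 * pstar / p1 + a2 * pstar / p2) * S10 := by ring
      _ = ((a1 / p1 + a2 / p2) * pstar) * S10 := by rw [h]
      _ = S10 := by rw [key]; ring
  · rw [d11, d12, d21, d22]; linear_combination (a1 + a2 + 1) * S11 * hsum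
end

section
/- Under the hypotheses of Theorem 2, the density of cell 1 in system S equals the density of cell 1 in system S*: P(1,0) + P(2,0) + P(1,1) + P(1,2) + P(2,1) + P(2,2) = P*(1,0) + P*(1,1). Similarly for cell 2: P(0,1) + P(0,2) + P(1,1) + P(1,2) + P(2,1) + P(2,2) = P*(0,1) + P*(1,1). -/
/-! Summing the formulas of Theorem 2 over the particle types, each cell state of `S*` is recovered
with total weight one: the type weights `aᵢ` and `aᵢ aⱼ` sum to `(a₁ + a₂)ᵏ = 1`, and the
moving-particle weights `aᵢ p* / pᵢ` sum to one because `p*` is the weighted harmonic mean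
of `p₁` and `p₂`. -/

section TypeWeights

variable {a1 a2 : ℝ}

theorem add_mul_eq_self_of_add_eq_one (hsum : a1 + a2 = 1) (x : ℝ) :
    a1 * x + a2 * x = x := by
  linear_combination x * hsum

theorem sq_add_mul_add_mul_add_sq_mul_eq_self_of_add_eq_one (hsum : a1 + a2 = 1) (x : ℝ) :
    a1 ^ 2 * x + a1 * a2 * x + a1 * a2 * x + a2 ^ 2 * x = x := by
  linear_combination x * (a1 + a2 + 1) * hsum

theorem harmonic_weights_mul_add_eq_self {p1 p2 : ℝ} (h : a1 / p1 + a2 / p2 ≠ 0) (x : ℝ) :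
    a1 * (1 / (a1 / p1 + a2 / p2)) / p1 * x + a2 * (1 / (a1 / p1 + a2 / p2)) / p2 * x = x := by
  have hsplit : a1 * (1 / (a1 / p1 + a2 / p2)) / p1 + a2 * (1 / (a1 / p1 + a2 / p2)) / p2 =
      (a1 / p1 + a2 / p2) * (1 / (a1 / p1 + a2 / p2)) := by ring
  rw [← add_mul, hsplit, mul_one_div_cancel h, one_mul]

end TypeWeights

theorem densities_match_general (p1 p2 a1 a2 : ℝ)
    (hp1 : p1 ∈ Set.Ioo (0:ℝ) 1) (hp2 : p2 ∈ Set.Ioo (0:ℝ) 1)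
    (ha1 : 0 < a1) (ha2 : 0 < a2) (hsum : a1 + a2 = 1)
    (pstar : ℝ) (hps : pstar = 1 / (a1 / p1 + a2 / p2))
    (S01 S10 S11 : ℝ)
    (P01 P02 P10 P20 P11 P12 P21 P22 : ℝ)
    (d01 : P01 = a1 * S01) (d02 : P02 = a2 * S01)
    (d10 : P10 = (a1 * pstar / p1) * S10) (d20 : P20 = (a2 * pstar / p2) * S10)
    (d11 : P11 = a1 ^ 2 * S11) (d12 : P12 = a1 * a2 * S11)
    (d21 : P21 = a1 * a2 * S11) (d22 : P22 = a2 ^ 2 * S11) :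
    P10 + P20 + P11 + P12 + P21 + P22 = S10 + S11 ∧
    P01 + P02 + P11 + P12 + P21 + P22 = S01 + S11 := by
  have hrate : a1 / p1 + a2 / p2 ≠ 0 := (add_pos (div_pos ha1 hp1.1) (div_pos ha2 hp2.1)).ne'
  subst hps d01 d02 d10 d20 d11 d12 d21 d22
  constructor
  · linear_combination harmonic_weights_mul_add_eq_self hrate S10 +
      sq_add_mul_add_mul_add_sq_mul_eq_self_of_add_eq_one hsum S11
  · linear_combination add_mul_eq_self_of_add_eq_one hsum S01 +
      sq_add_mul_add_mul_add_sq_mul_eq_self_of_add_eq_one hsum S11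

theorem densities_match (α β p1 p2 a1 a2 : ℝ)
    (hα : α ∈ Set.Ioo (0:ℝ) 1) (hβ : β ∈ Set.Ioo (0:ℝ) 1)
    (hp1 : p1 ∈ Set.Ioo (0:ℝ) 1) (hp2 : p2 ∈ Set.Ioo (0:ℝ) 1)
    (ha1 : 0 < a1) (ha2 : 0 < a2) (hsum : a1 + a2 = 1)
    (pstar : ℝ) (hps : pstar = 1 / (a1 / p1 + a2 / p2))
    (S00 S01 S10 S11 : ℝ)
    (e12 : α * S00 = (1 - α) * β * S01)
    (e13 : (1 - (1 - α) * (1 - β)) * S01 = pstar * S10)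
    (e14 : pstar * S10 = α * S00 + α * β * S01 + β * S11)
    (e15 : β * S11 = α * (1 - β) * S01)
    (e16 : S00 + S01 + S10 + S11 = 1)
    (P00 P01 P02 P10 P20 P11 P12 P21 P22 : ℝ)
    (d00 : P00 = S00) (d01 : P01 = a1 * S01) (d02 : P02 = a2 * S01)
    (d10 : P10 = (a1 * pstar / p1) * S10) (d20 : P20 = (a2 * pstar / p2) * S10)
    (d11 : P11 = a1 ^ 2 * S11) (d12 : P12 = a1 * a2 * S11)
    (d21 : P21 = a1 * a2 * S11) (d22 : P22 = a2 ^ 2 * S11) :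
    P10 + P20 + P11 + P12 + P21 + P22 = S10 + S11 ∧
    P01 + P02 + P11 + P12 + P21 + P22 = S01 + S11 :=
  densities_match_general p1 p2 a1 a2 hp1 hp2 ha1 ha2 hsum pstar hps S01 S10 S11 P01 P02 P10 P20 P11
    P12 P21 P22 d01 d02 d10 d20 d11 d12 d21 d22
end

section
/- Under the hypotheses of Theorem 2, the particle flow rates of systems S and S* coincide: α·(1 − ρ1) = α·(1 − ρ1*), where ρ1 = P(1,0)+P(2,0)+P(1,1)+P(1,2)+P(2,1)+P(2,2) and ρ1* = P*(1,0)+P*(1,1). -/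
theorem flow_rates_match (α β p1 p2 a1 a2 : ℝ)
    (hα : α ∈ Set.Ioo (0:ℝ) 1) (hβ : β ∈ Set.Ioo (0:ℝ) 1)
    (hp1 : p1 ∈ Set.Ioo (0:ℝ) 1) (hp2 : p2 ∈ Set.Ioo (0:ℝ) 1)
    (ha1 : 0 < a1) (ha2 : 0 < a2) (hsum : a1 + a2 = 1)
    (pstar : ℝ) (hps : pstar = 1 / (a1 / p1 + a2 / p2))
    (S00 S01 S10 S11 : ℝ)
    (e12 : α * S00 = (1 - α) * β * S01)
    (e13 : (1 - (1 - α) * (1 - β)) * S01 = pstar * S10)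
    (e14 : pstar * S10 = α * S00 + α * β * S01 + β * S11)
    (e15 : β * S11 = α * (1 - β) * S01)
    (e16 : S00 + S01 + S10 + S11 = 1)
    (P00 P01 P02 P10 P20 P11 P12 P21 P22 : ℝ)
    (d00 : P00 = S00) (d01 : P01 = a1 * S01) (d02 : P02 = a2 * S01)
    (d10 : P10 = (a1 * pstar / p1) * S10) (d20 : P20 = (a2 * pstar / p2) * S10)
    (d11 : P11 = a1 ^ 2 * S11) (d12 : P12 = a1 * a2 * S11)
    (d21 : P21 = a1 * a2 * S11) (d22 : P22 = a2 ^ 2 * S11) :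
    α * (1 - (P10 + P20 + P11 + P12 + P21 + P22)) = α * (1 - (S10 + S11)) := by
  obtain ⟨hp1a, hp1b⟩ := hp1
  obtain ⟨hp2a, hp2b⟩ := hp2
  have hd : a1 / p1 + a2 / p2 > 0 := by positivity
  have key : a1 * pstar / p1 + a2 * pstar / p2 = 1 := by
    rw [hps]
    field_simp
  have h1 : a1 * pstar / p1 * S10 + a2 * pstar / p2 * S10 = S10 := by
    linear_combination S10 * key
  have h2 : a1 ^ 2 * S11 + a1 * a2 * S11 + a1 * a2 * S11 + a2 ^ 2 * S11 = S11 := by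
    have h : (a1 + a2) ^ 2 = 1 := by rw [hsum]; ring
    linear_combination S11 * h
  subst d10 d20 d11 d12 d21 d22
  linear_combination -α * h1 - α * h2
end

section
/- Let α, β ∈ (0,1), a1, a2 > 0 with a1 + a2 = 1, p1, p2 ∈ (0,1]. Suppose nonnegative reals P(x1,x2), (x1,x2) ∈ {0,1,2}², satisfy the nine balance equations of the two-type two-cell system with β1 = β2 = β (as in Theorem 2) and normalization. Then P(0,1)/P(0,2) = a1/a2, i.e., a2·P(0,1) = a1·P(0,2), and likewise a2·P(1,1) = a1·P(1,2), a2·P(2,1) = a1·P(2,2). -/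
/-!
Summing the balance equations of the states `(0,i)`, `(i,0)`, `(i,1)`, `(i,2)` shows that
`(1 - (1 - α)(1 - β)) P(0,i) = α aᵢ (P(0,0) + P(0,1) + P(0,2))`: cell 2 receives type `i`
in proportion `aᵢ`, whatever the occupancy. Since `β P(j,i) = α aⱼ (1 - β) P(0,i)`, the
occupied-cell-1 probabilities inherit the same proportion.
-/

lemma mul_eq_mul_of_mul_eq_mul_of_cancel {R : Type*} [CommRing R] [IsDomain R]
    {c k a b u v x y : R} (hc : c ≠ 0) (hx : c * x = k * u) (hy : c * y = k * v)
    (huv : b * u = a * v) : b * x = a * y :=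
  mul_left_cancel₀ hc <| by linear_combination b * hx - a * hy + k * huv

lemma one_sub_one_sub_mul_one_sub_ne_zero {α β : ℝ} (hα : α ∈ Set.Ioo (0:ℝ) 1)
    (hβ : β ∈ Set.Ioo (0:ℝ) 1) : 1 - (1 - α) * (1 - β) ≠ 0 := by
  obtain ⟨hα0, hα1⟩ := hα
  obtain ⟨hβ0, hβ1⟩ := hβ
  nlinarith

lemma cell_two_type_balance {R : Type*} [CommRing R] {α β a p q r s0 s1 s2 t1 t2 : R}
    (hout : (1 - (1 - α) * (1 - β)) * q = p * r)
    (hin : p * r = α * a * (s0 + β * (s1 + s2)) + β * (t1 + t2))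
    (ht1 : β * t1 = α * a * (1 - β) * s1) (ht2 : β * t2 = α * a * (1 - β) * s2) :
    (1 - (1 - α) * (1 - β)) * q = α * (s0 + s1 + s2) * a := by
  linear_combination hout + hin + ht1 + ht2

theorem type_distribution_in_cells_general (α β p1 p2 a1 a2 : ℝ)
    (hα : α ∈ Set.Ioo (0:ℝ) 1) (hβ : β ∈ Set.Ioo (0:ℝ) 1)
    (P00 P01 P02 P10 P20 P11 P12 P21 P22 : ℝ)
    (e18 : (1 - (1 - α) * (1 - β)) * P01 = p1 * P10)
    (e19 : (1 - (1 - α) * (1 - β)) * P02 = p2 * P20)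
    (e20 : p1 * P10 = α * a1 * (P00 + β * (P01 + P02)) + β * (P11 + P12))
    (e21 : β * P11 = α * a1 * (1 - β) * P01)
    (e22 : β * P12 = α * a1 * (1 - β) * P02)
    (e23 : p2 * P20 = α * a2 * (P00 + β * (P01 + P02)) + β * (P21 + P22))
    (e24 : β * P21 = α * a2 * (1 - β) * P01)
    (e25 : β * P22 = α * a2 * (1 - β) * P02) :
    a2 * P01 = a1 * P02 ∧ a2 * P11 = a1 * P12 ∧ a2 * P21 = a1 * P22 := by
  have hβ0 : β ≠ 0 := hβ.1.ne'
  have cell_two : a2 * P01 = a1 * P02 :=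
    mul_eq_mul_of_mul_eq_mul_of_cancel (one_sub_one_sub_mul_one_sub_ne_zero hα hβ)
      (cell_two_type_balance e18 e20 e21 e22) (cell_two_type_balance e19 e23 e24 e25)
      (mul_comm a2 a1)
  exact ⟨cell_two, mul_eq_mul_of_mul_eq_mul_of_cancel hβ0 e21 e22 cell_two,
    mul_eq_mul_of_mul_eq_mul_of_cancel hβ0 e24 e25 cell_two⟩

theorem type_distribution_in_cells (α β p1 p2 a1 a2 : ℝ)
    (hα : α ∈ Set.Ioo (0:ℝ) 1) (hβ : β ∈ Set.Ioo (0:ℝ) 1)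
    (ha1 : 0 < a1) (ha2 : 0 < a2) (hsum : a1 + a2 = 1)
    (hp1 : p1 ∈ Set.Ioc (0:ℝ) 1) (hp2 : p2 ∈ Set.Ioc (0:ℝ) 1)
    (P00 P01 P02 P10 P20 P11 P12 P21 P22 : ℝ)
    (h00 : 0 ≤ P00) (h01 : 0 ≤ P01) (h02 : 0 ≤ P02) (h10 : 0 ≤ P10) (h20 : 0 ≤ P20)
    (h11 : 0 ≤ P11) (h12 : 0 ≤ P12) (h21 : 0 ≤ P21) (h22 : 0 ≤ P22)
    (e17 : α * P00 = (1 - α) * β * (P01 + P02))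
    (e18 : (1 - (1 - α) * (1 - β)) * P01 = p1 * P10)
    (e19 : (1 - (1 - α) * (1 - β)) * P02 = p2 * P20)
    (e20 : p1 * P10 = α * a1 * (P00 + β * (P01 + P02)) + β * (P11 + P12))
    (e21 : β * P11 = α * a1 * (1 - β) * P01)
    (e22 : β * P12 = α * a1 * (1 - β) * P02)
    (e23 : p2 * P20 = α * a2 * (P00 + β * (P01 + P02)) + β * (P21 + P22))
    (e24 : β * P21 = α * a2 * (1 - β) * P01)
    (e25 : β * P22 = α * a2 * (1 - β) * P02)
    (e26 : P00 + P01 + P02 + P10 + P20 + P11 + P12 + P21 + P22 = 1) :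
    a2 * P01 = a1 * P02 ∧ a2 * P11 = a1 * P12 ∧ a2 * P21 = a1 * P22 :=
  type_distribution_in_cells_general α β p1 p2 a1 a2 hα hβ P00 P01 P02 P10 P20 P11 P12 P21 P22 e18
    e19 e20 e21 e22 e23 e24 e25
end
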